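/- If P is the disjoint union of canonical programs CP[A₁], …, CP[A_l] over pairwise disjoint finite nonempty sets A₁,…,A_l of atoms, then the stable models of P are exactly the sets {x₁,…,x_l} with xᵢ ∈ Aᵢ for each i; in particular P has |A₁|·…·|A_l| stable models. -/
import Mathlib


/-- A normal program clause: head ← pos, not(neg). -/
structure Clause where
  head : ℕ
  pos : Finset ℕ
  neg : Finset ℕ
deriving DecidableEq

/-- N is closed under (is a model of) the Gelfond–Lifschitz reduct of P with respect to M. -/
def ReductClosed (P : Finset Clause) (M N : Set ℕ) : Prop :=
  ∀ c ∈ P, (∀ a ∈ c.neg, a ∉ M) → (↑c.pos : Set ℕ) ⊆ N → c.head ∈ N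

/-- M is a stable model of P: M is the least model of the reduct P^M. -/
def IsStableModel (P : Finset Clause) (M : Set ℕ) : Prop :=
  ReductClosed P M M ∧ ∀ N : Set ℕ, ReductClosed P M N → M ⊆ N

/-- The canonical program CP[A]: for each a ∈ A the clause
a ← not(b) for all b ∈ A, b ≠ a. -/
def CP (A : Finset ℕ) : Finset Clause :=
  A.image (fun a => ⟨a, ∅, A.erase a⟩)

/-- Stable models of a disjoint union of canonical programs are exactly the
selections of one atom from each block; their number is the product of the
block sizes. -/
theorem union_canonical_stable_models (l : ℕ) (A : Fin l → Finset ℕ)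
    (hne : ∀ i, (A i).Nonempty)
    (hdisj : Pairwise (Function.onFun Disjoint A)) :
    (∀ M : Set ℕ,
        IsStableModel (Finset.univ.biUnion fun i => CP (A i)) M ↔
          ∃ x : Fin l → ℕ, (∀ i, x i ∈ A i) ∧ M = Set.range x) ∧
    {M : Set ℕ | IsStableModel (Finset.univ.biUnion fun i => CP (A i)) M}.ncard =
      ∏ i, (A i).card := by
  set P : Finset Clause := Finset.univ.biUnion fun i => CP (A i) with hP
  have memP : ∀ c : Clause, c ∈ P ↔ ∃ i, ∃ a ∈ A i,
      c = ⟨a, ∅, (A i).erase a⟩ := by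
    intro c
    simp only [hP, Finset.mem_biUnion, Finset.mem_univ, true_and, CP, Finset.mem_image]
    constructor
    · rintro ⟨i, a, ha, rfl⟩; exact ⟨i, a, ha, rfl⟩
    · rintro ⟨i, a, ha, rfl⟩; exact ⟨i, a, ha, rfl⟩
  -- disjointness in elementwise form
  have hdis : ∀ {i j : Fin l} {a : ℕ}, a ∈ A i → a ∈ A j → i = j := by
    intro i j a hi hj
    by_contra hij
    exact (Finset.disjoint_left.1 (hdisj hij)) hi hj
  have main : ∀ M : Set ℕ, IsStableModel P M ↔
      ∃ x : Fin l → ℕ, (∀ i, x i ∈ A i) ∧ M = Set.range x := by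
    intro M
    constructor
    · rintro ⟨hclosed, hmin⟩
      -- M is contained in the union of the blocks
      have hsub : M ⊆ {a | ∃ i, a ∈ A i} := by
        apply hmin
        intro c hc hneg hpos
        obtain ⟨i, a, ha, rfl⟩ := (memP c).1 hc
        exact ⟨i, ha⟩
      -- each block meets M
      have hmeets : ∀ i, ∃ a, a ∈ A i ∧ a ∈ M := by
        intro i
        by_contra h
        push_neg at h
        obtain ⟨a, ha⟩ := hne i
        have hcP : (⟨a, ∅, (A i).erase a⟩ : Clause) ∈ P :=
          (memP _).2 ⟨i, a, ha, rfl⟩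
        have := hclosed _ hcP (fun b hb => h b (Finset.mem_of_mem_erase hb))
          (by simp)
        exact h a ha this
      -- each block meets M in at most one point
      have huniq : ∀ i, ∀ a ∈ A i, ∀ b ∈ A i, a ∈ M → b ∈ M → a = b := by
        intro i a hai b hbi haM hbM
        by_contra hab
        have hclosedN : ReductClosed P M (M \ {b}) := by
          intro c hc hneg hpos
          obtain ⟨j, h, hh, rfl⟩ := (memP c).1 hc
          by_cases hji : j = i
          · subst hji
            -- at least one of a, b lies in (A j).erase h and in M: contradiction
            by_cases hha : h = a
            · subst hha
              exact absurd hbM (hneg b (Finset.mem_erase.2 ⟨Ne.symm hab, hbi⟩))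
            · exact absurd haM (hneg a (Finset.mem_erase.2 ⟨Ne.symm hha, hai⟩))
          · have hhM : h ∈ M := hclosed _ hc hneg (by simp)
            refine ⟨hhM, ?_⟩
            intro he
            have heb : h = b := he
            exact hji (hdis hh (heb ▸ hbi))
        have := hmin _ hclosedN hbM
        exact this.2 rfl
      choose x hx1 hx2 using hmeets
      refine ⟨x, hx1, ?_⟩
      ext m
      constructor
      · intro hm
        obtain ⟨i, hi⟩ := hsub hm
        exact ⟨i, (huniq i (x i) (hx1 i) m hi (hx2 i) hm)⟩
      · rintro ⟨i, rfl⟩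
        exact hx2 i
    · rintro ⟨x, hx, rfl⟩
      -- membership characterization: a ∈ A i ∩ range x ↔ a = x i
      have hchar : ∀ {i : Fin l} {a : ℕ}, a ∈ A i → a ∈ Set.range x → a = x i := by
        rintro i a hai ⟨j, rfl⟩
        rw [hdis (hx j) hai]
      constructor
      · intro c hc hneg _
        obtain ⟨i, a, ha, rfl⟩ := (memP c).1 hc
        -- x i ∈ A i and x i ∈ range x; if x i ∈ erase a then contradiction
        by_cases hxa : x i = a
        · exact ⟨i, hxa⟩
        · exact absurd ⟨i, rfl⟩ (hneg (x i) (Finset.mem_erase.2 ⟨hxa, hx i⟩))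
      · intro N hN
        rintro m ⟨i, rfl⟩
        have hcP : (⟨x i, ∅, (A i).erase (x i)⟩ : Clause) ∈ P :=
          (memP _).2 ⟨i, x i, hx i, rfl⟩
        refine hN _ hcP ?_ (by simp)
        intro b hb hbM
        obtain ⟨hbne, hbA⟩ := Finset.mem_erase.1 hb
        exact hbne (hchar hbA hbM)
  refine ⟨main, ?_⟩
  have hS : {M : Set ℕ | IsStableModel P M} =
      (fun x : Fin l → ℕ => Set.range x) '' ↑(Fintype.piFinset A) := by
    ext M
    simp only [Set.mem_setOf_eq, main M, Set.mem_image, Finset.coe_sort_coe,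
      Fintype.mem_piFinset, Finset.mem_coe]
    constructor
    · rintro ⟨x, h1, rfl⟩; exact ⟨x, h1, rfl⟩
    · rintro ⟨x, h1, rfl⟩; exact ⟨x, h1, rfl⟩
  rw [hS, Set.ncard_image_of_injOn, Set.ncard_coe_finset, Fintype.card_piFinset]
  intro x hxm y hym hxy
  simp only [Finset.mem_coe, Fintype.mem_piFinset] at hxm hym
  funext i
  have hxy' : Set.range x = Set.range y := hxy
  have : x i ∈ Set.range y := hxy' ▸ ⟨i, rfl⟩
  obtain ⟨j, hj⟩ := this
  have hij : j = i := hdis (hym j) (hj ▸ hxm i)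
  rw [← hj, hij]
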